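/- arXiv:1912.11442 — 3 statements merged into one kernel-verified Lean document; each statement's English description precedes it below -/
import Mathlib

section
/- Borel's growth lemma: Let φ : [r₀, ∞) → [0, ∞) be a monotone increasing differentiable function with φ(r₀) ≥ 1, and let δ > 0. Then the set of r ≥ r₀ at which φ'(r) > φ(r)^{1+δ} has finite Lebesgue measure. -/
/-!
The function `ψ = -φ ^ (-δ)` is monotone on `[r₀, ∞)` with values in `[-φ r₀ ^ (-δ), 0]`, and
`ψ' = δ φ' φ ^ (-1 - δ) > δ` on the exceptional set. For a monotone function the integral of the
derivative is at most the increase of the function (Lebesgue), so Markov's inequality on each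
interval `[r₀, r₀ + n]` gives `δ · |E| ≤ φ r₀ ^ (-δ)`.
-/

open MeasureTheory Set

theorem MonotoneOn.mul_measureReal_setOf_le_deriv_le_sub {f : ℝ → ℝ} {a b : ℝ} (hab : a ≤ b)
    (hf : MonotoneOn f (Icc a b)) (c : ℝ) :
    c * volume.real {x ∈ Ioo a b | c ≤ deriv f x} ≤ f b - f a := by
  rw [← uIcc_of_le hab] at hf
  have hderiv_nonneg : ∀ x ∈ Ioo a b, 0 ≤ deriv f x := fun x hx => by
    rw [← derivWithin_of_mem_nhds (uIcc_of_le hab ▸ Icc_mem_nhds hx.1 hx.2)]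
    exact hf.derivWithin_nonneg
  have hint : IntegrableOn (deriv f) (Ioo a b) :=
    (intervalIntegrable_iff_integrableOn_Ioo_of_le hab).1 hf.intervalIntegrable_deriv
  have hfab : f a ≤ f b := hf left_mem_uIcc right_mem_uIcc hab
  calc c * volume.real {x ∈ Ioo a b | c ≤ deriv f x}
      = c * (volume.restrict (Ioo a b)).real {x | c ≤ deriv f x} := by
        rw [measureReal_restrict_apply (measurableSet_le measurable_const (measurable_deriv f)),
          inter_comm]
        rfl
    _ ≤ ∫ x in Ioo a b, deriv f x :=
        mul_meas_ge_le_integral_of_nonneg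
          ((ae_restrict_iff' measurableSet_Ioo).2 (.of_forall hderiv_nonneg)) hint c
    _ = ∫ x in a..b, deriv f x := by
        rw [intervalIntegral.integral_of_le hab, integral_Ioc_eq_integral_Ioo]
    _ ≤ f b - f a := (uIcc_of_le (sub_nonneg.2 hfab) ▸ hf.intervalIntegral_deriv_mem_uIcc).2

theorem MonotoneOn.volume_setOf_le_deriv_le_of_le {f : ℝ → ℝ} {a M c : ℝ}
    (hf : MonotoneOn f (Ici a)) (hM : ∀ x ∈ Ici a, f x ≤ M) (hc : 0 < c) :
    volume {x ∈ Ici a | c ≤ deriv f x} ≤ ENNReal.ofReal ((M - f a) / c) := by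
  have hbounded (n : ℕ) :
      volume {x ∈ Ioo a (a + n) | c ≤ deriv f x} ≤ ENNReal.ofReal ((M - f a) / c) := by
    have hn : a ≤ a + n := le_add_of_nonneg_right n.cast_nonneg
    rw [← ofReal_measureReal (measure_ne_top_of_subset (sep_subset _ _) measure_Ioo_lt_top.ne)]
    refine ENNReal.ofReal_le_ofReal ((le_div_iff₀' hc).2 ?_)
    calc _ ≤ f (a + n) - f a :=
          (hf.mono Icc_subset_Ici_self).mul_measureReal_setOf_le_deriv_le_sub hn c
      _ ≤ M - f a := by linarith [hM (a + n) hn]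
  calc volume {x ∈ Ici a | c ≤ deriv f x}
      = volume {x ∈ Ioi a | c ≤ deriv f x} :=
        measure_congr (Ioi_ae_eq_Ici.inter (ae_eq_refl _)).symm
    _ ≤ volume (⋃ n : ℕ, {x ∈ Ioo a (a + n) | c ≤ deriv f x}) := by
        refine measure_mono fun x ⟨hx, hcx⟩ => ?_
        obtain ⟨n, hn⟩ := exists_nat_gt (x - a)
        exact mem_iUnion.2 ⟨n, ⟨hx, by linarith⟩, hcx⟩
    _ ≤ ENNReal.ofReal ((M - f a) / c) := by
        rw [Monotone.measure_iUnion]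
        · exact iSup_le hbounded
        · exact fun m n hmn x ⟨hx, hcx⟩ => ⟨Ioo_subset_Ioo_right (by gcongr) hx, hcx⟩

theorem MonotoneOn.neg_rpow_neg {φ : ℝ → ℝ} {s : Set ℝ} (hφ : MonotoneOn φ s)
    (hpos : ∀ x ∈ s, 0 < φ x) {δ : ℝ} (hδ : 0 ≤ δ) :
    MonotoneOn (fun x => -φ x ^ (-δ)) s := fun _ hx _ hy hxy =>
  neg_le_neg (Real.rpow_le_rpow_of_nonpos (hpos _ hx) (hφ hx hy hxy) (neg_nonpos.2 hδ))

theorem lt_deriv_neg_rpow_neg_of_rpow_lt_deriv {φ : ℝ → ℝ} {x δ : ℝ} (hpos : 0 < φ x)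
    (hδ : 0 < δ) (h : φ x ^ (1 + δ) < deriv φ x) : δ < deriv (fun r => -φ r ^ (-δ)) x := by
  have hdiff : DifferentiableAt ℝ φ x :=
    differentiableAt_of_deriv_ne_zero (by linarith [Real.rpow_pos_of_pos hpos (1 + δ)])
  have hψ : HasDerivAt (fun r => -φ r ^ (-δ)) (-(deriv φ x * -δ * φ x ^ (-δ - 1))) x :=
    (hdiff.hasDerivAt.rpow_const (.inl hpos.ne')).neg
  rw [hψ.deriv]
  have hinv : φ x ^ (-δ - 1) * φ x ^ (1 + δ) = 1 := by
    rw [← Real.rpow_add hpos, show -δ - 1 + (1 + δ) = 0 by ring, Real.rpow_zero]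
  have := mul_lt_mul_of_pos_left h (mul_pos hδ (Real.rpow_pos_of_pos hpos (-δ - 1)))
  nlinarith

theorem borel_growth_lemma_general (r₀ : ℝ) (φ : ℝ → ℝ)
    (hmono : MonotoneOn φ (Set.Ici r₀))
    (hone : ∀ r ∈ Set.Ici r₀, 1 ≤ φ r)
    (δ : ℝ) (hδ : 0 < δ) :
    volume {r : ℝ | r₀ ≤ r ∧ (φ r) ^ (1 + δ) < deriv φ r} < ⊤ := by
  have hpos : ∀ r ∈ Ici r₀, 0 < φ r := fun r hr => one_pos.trans_le (hone r hr)
  have hψ_nonpos : ∀ r ∈ Ici r₀, -φ r ^ (-δ) ≤ 0 := fun r hr =>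
    neg_nonpos.2 (Real.rpow_nonneg (hpos r hr).le _)
  calc volume {r : ℝ | r₀ ≤ r ∧ (φ r) ^ (1 + δ) < deriv φ r}
      ≤ volume {r ∈ Ici r₀ | δ ≤ deriv (fun r => -φ r ^ (-δ)) r} :=
        measure_mono fun r ⟨hr, hE⟩ =>
          ⟨hr, (lt_deriv_neg_rpow_neg_of_rpow_lt_deriv (hpos r hr) hδ hE).le⟩
    _ ≤ ENNReal.ofReal ((0 - -φ r₀ ^ (-δ)) / δ) :=
        (hmono.neg_rpow_neg hpos hδ.le).volume_setOf_le_deriv_le_of_le hψ_nonpos hδ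
    _ < ⊤ := ENNReal.ofReal_lt_top

/-- Borel's growth lemma: if `φ : [r₀, ∞) → [1, ∞)` is monotone increasing and
differentiable, and `δ > 0`, then the set of `r ≥ r₀` at which
`φ'(r) > φ(r)^(1+δ)` has finite Lebesgue measure. -/
theorem borel_growth_lemma (r₀ : ℝ) (φ : ℝ → ℝ)
    (hmono : MonotoneOn φ (Set.Ici r₀))
    (hdiff : ∀ r ∈ Set.Ici r₀, DifferentiableAt ℝ φ r)
    (hone : ∀ r ∈ Set.Ici r₀, 1 ≤ φ r)
    (δ : ℝ) (hδ : 0 < δ) :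
    volume {r : ℝ | r₀ ≤ r ∧ (φ r) ^ (1 + δ) < deriv φ r} < ⊤ :=
  borel_growth_lemma_general r₀ φ hmono hone δ hδ
end

section
/- Schumacher's algebraic inequality: Let α_1, ..., α_n and G_1, ..., G_n be positive real numbers. Then Σ_{j=2}^{n} ( α_j · G_j^{j+1}/G_{j-1}^{j-1} − α_{j-1} · G_j^{j}/G_{j-1}^{j-2} ) ≥ (1/2) ( −(α_1³/α_2²)·G_1² + (α_{n-1}^{n-1}/α_n^{n-2})·G_n² + Σ_{j=2}^{n-1} ( α_{j-1}^{j-1}/α_j^{j-2} − α_j^{j+2}/α_{j+1}^{j+1} ) · G_j² ). -/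
open Finset

private lemma aux_sign (m : ℕ) (x t : ℝ) (hx : 0 ≤ x) (ht : 0 ≤ t) :
    0 ≤ (x - t) * (x ^ m - t ^ m) := by
  rcases le_total t x with h | h
  · exact mul_nonneg (by linarith) (by nlinarith [pow_le_pow_left₀ ht h m])
  · nlinarith [mul_nonneg (by linarith : (0:ℝ) ≤ t - x)
      (by nlinarith [pow_le_pow_left₀ hx h m] : (0:ℝ) ≤ t ^ m - x ^ m)]

private lemma key_ineq (j : ℕ) (hj : 2 ≤ j) (a b g h : ℝ)
    (ha : 0 < a) (hb : 0 < b) (hg : 0 < g) (hh : 0 < h) :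
    (1/2 : ℝ) * (a ^ (j-1) / b ^ (j-2) * h ^ 2 - a ^ (j+1) / b ^ j * g ^ 2)
      ≤ b * h ^ (j+1) / g ^ (j-1) - a * h ^ j / g ^ (j-2) := by
  obtain ⟨k, rfl⟩ : ∃ k, j = k + 2 := ⟨j - 2, by omega⟩
  simp only [show k + 2 - 1 = k + 1 from rfl, show k + 2 - 2 = k from rfl]
  rw [← sub_nonneg]
  set X := b * h with hX
  set T := a * g with hT
  have hD : 0 ≤ 2*X^(k+3) - 2*T*X^(k+2) - T^(k+1)*X^2 + T^(k+3) := by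
    have h1 := aux_sign (k+2) X T (by positivity) (by positivity)
    have h2 := aux_sign (k+1) X T (by positivity) (by positivity)
    have h3 : (0:ℝ) ≤ X * ((X - T) * (X ^ (k+1) - T ^ (k+1))) :=
      mul_nonneg (by positivity) h2
    have hDeq : 2*X^(k+3) - 2*T*X^(k+2) - T^(k+1)*X^2 + T^(k+3)
        = (X - T) * (X ^ (k+2) - T ^ (k+2)) + X * ((X - T) * (X ^ (k+1) - T ^ (k+1))) := by
      ring
    rw [hDeq]; linarith
  have heq : b * h ^ (k + 2 + 1) / g ^ (k + 1) - a * h ^ (k + 2) / g ^ k -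
      (1/2 : ℝ) * (a ^ (k + 1) / b ^ k * h ^ 2 - a ^ (k + 2 + 1) / b ^ (k + 2) * g ^ 2)
      = (2*X^(k+3) - 2*T*X^(k+2) - T^(k+1)*X^2 + T^(k+3))
        / (2 * b ^ (k+2) * g ^ (k+1)) := by
    rw [hX, hT]
    field_simp
    ring
  rw [heq]
  positivity

private lemma sum_eq (m : ℕ) (α G : ℕ → ℝ) :
    (1/2 : ℝ) * (-(α 1 ^ 3 / α 2 ^ 2) * G 1 ^ 2
        + (α (m+1) ^ (m+1) / α (m+2) ^ m) * G (m+2) ^ 2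
        + ∑ j ∈ Finset.Icc 2 (m+1),
            (α (j-1) ^ (j-1) / α j ^ (j-2) - α j ^ (j+2) / α (j+1) ^ (j+1)) * G j ^ 2)
    = ∑ j ∈ Finset.Icc 2 (m+2),
        (1/2 : ℝ) * (α (j-1) ^ (j-1) / α j ^ (j-2) * G j ^ 2
          - α (j-1) ^ (j+1) / α j ^ j * G (j-1) ^ 2) := by
  induction m with
  | zero =>
    norm_num
    ring
  | succ m ih =>
    rw [Finset.sum_Icc_succ_top (by omega : 2 ≤ m + 2),
        Finset.sum_Icc_succ_top (by omega : 2 ≤ m + 3)]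
    simp only [show m + 2 - 1 = m + 1 from rfl, show m + 2 - 2 = m from rfl,
      show m + 3 - 1 = m + 2 from rfl, show m + 3 - 2 = m + 1 from rfl,
      show m + 2 + 1 = m + 3 from rfl]
    linarith [ih]

/-- Schumacher's algebraic inequality: for positive reals `α 1, …, α n` and
`G 1, …, G n` (with `n ≥ 2`),
`Σ_{j=2}^{n} ( αⱼ Gⱼ^{j+1}/G_{j-1}^{j-1} − α_{j-1} Gⱼ^{j}/G_{j-1}^{j-2} )`
`≥ (1/2) ( −(α₁³/α₂²) G₁² + (α_{n-1}^{n-1}/α_n^{n-2}) G_n²`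
`+ Σ_{j=2}^{n-1} ( α_{j-1}^{j-1}/α_j^{j-2} − α_j^{j+2}/α_{j+1}^{j+1} ) Gⱼ² )`. -/
theorem schumacher_inequality (n : ℕ) (hn : 2 ≤ n) (α G : ℕ → ℝ)
    (hα : ∀ j ∈ Finset.Icc 1 n, 0 < α j)
    (hG : ∀ j ∈ Finset.Icc 1 n, 0 < G j) :
    (1 / 2) * (-(α 1 ^ 3 / α 2 ^ 2) * G 1 ^ 2
        + (α (n - 1) ^ (n - 1) / α n ^ (n - 2)) * G n ^ 2
        + ∑ j ∈ Finset.Icc 2 (n - 1),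
            (α (j - 1) ^ (j - 1) / α j ^ (j - 2) - α j ^ (j + 2) / α (j + 1) ^ (j + 1))
              * G j ^ 2)
      ≤ ∑ j ∈ Finset.Icc 2 n,
          (α j * G j ^ (j + 1) / G (j - 1) ^ (j - 1)
            - α (j - 1) * G j ^ j / G (j - 1) ^ (j - 2)) := by
  obtain ⟨m, rfl⟩ : ∃ m, n = m + 2 := ⟨n - 2, by omega⟩
  simp only [show m + 2 - 1 = m + 1 from rfl, show m + 2 - 2 = m from rfl]
  rw [sum_eq m α G]
  apply Finset.sum_le_sum
  intro j hj
  rw [Finset.mem_Icc] at hj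
  have h2j : 2 ≤ j := hj.1
  have hjn : j ≤ m + 2 := hj.2
  have hαj := hα j (Finset.mem_Icc.mpr ⟨by omega, by omega⟩)
  have hαj1 := hα (j-1) (Finset.mem_Icc.mpr ⟨by omega, by omega⟩)
  have hGj := hG j (Finset.mem_Icc.mpr ⟨by omega, by omega⟩)
  have hGj1 := hG (j-1) (Finset.mem_Icc.mpr ⟨by omega, by omega⟩)
  exact key_ineq j h2j (α (j-1)) (α j) (G (j-1)) (G j) hαj1 hαj hGj1 hGj
end

section
/- Convex-sum curvature inequality (Schumacher): Let G_1, ..., G_n be positive smooth functions on an open set C ⊆ ℂ and α_1, ..., α_n > 0 constants. Then, pointwise, i∂∂̄ log(Σ_{j=1}^n j α_j G_j) ≥ (Σ_{j=1}^n j α_j G_j · i∂∂̄ log G_j) / (Σ_{j=1}^n j α_j G_j), where the inequality is between real (1,1)-forms (equivalently, between the corresponding Laplacian densities). -/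
open Finset

/-- The Euclidean Laplacian `Δu = u_xx + u_yy` of `u : ℂ → ℝ`, so that
`i∂∂̄ u = (1/2) Δu · (i dz ∧ dz̄ factor)`. -/
noncomputable def lap (u : ℂ → ℝ) (z : ℂ) : ℝ :=
  fderiv ℝ (fun w => fderiv ℝ u w 1) z 1
    + fderiv ℝ (fun w => fderiv ℝ u w Complex.I) z Complex.I

/-!
Along a direction `v`, `∂ᵥ² log u = ∂ᵥ² u / u - (∂ᵥ u)² / u²`, and `∂ᵥ`, `∂ᵥ²` are linear. For
`S = Σ cⱼ Gⱼ` the second-order terms of `∂ᵥ² log S` and of the average `Σ cⱼ Gⱼ ∂ᵥ² log Gⱼ / S`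
therefore agree, and the first-order terms compare by Cauchy–Schwarz in Sedrakyan's form,
`(Σ cⱼ ∂ᵥGⱼ)² / S ≤ Σ cⱼ (∂ᵥGⱼ)² / Gⱼ`. The Laplacian is the sum over the directions `1` and `i`.
-/

open Filter Topology

theorem Finset.sq_sum_mul_div_sum_mul_le {ι R : Type*} [Field R] [LinearOrder R]
    [IsStrictOrderedRing R] (s : Finset ι) {c g : ι → R} (hc : ∀ j ∈ s, 0 < c j)
    (hg : ∀ j ∈ s, 0 < g j) (p : ι → R) :
    (∑ j ∈ s, c j * p j) ^ 2 / ∑ j ∈ s, c j * g j ≤ ∑ j ∈ s, c j * p j ^ 2 / g j :=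
  calc (∑ j ∈ s, c j * p j) ^ 2 / ∑ j ∈ s, c j * g j
      ≤ ∑ j ∈ s, (c j * p j) ^ 2 / (c j * g j) :=
        sq_sum_div_le_sum_sq_div s _ fun j hj => mul_pos (hc j hj) (hg j hj)
    _ = ∑ j ∈ s, c j * p j ^ 2 / g j := by
        refine sum_congr rfl fun j hj => ?_
        have := (hc j hj).ne'
        field_simp

section SecondDirDeriv

variable {E : Type*} [NormedAddCommGroup E] [NormedSpace ℝ E]

noncomputable def secondDirDeriv (u : E → ℝ) (v z : E) : ℝ :=
  fderiv ℝ (fun w => fderiv ℝ u w v) z v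

theorem lap_eq_secondDirDeriv_add (u : ℂ → ℝ) (z : ℂ) :
    lap u z = secondDirDeriv u 1 z + secondDirDeriv u Complex.I z :=
  rfl

variable {u : E → ℝ} {z : E}

theorem ContDiffAt.eventually_differentiableAt (hu : ContDiffAt ℝ 2 u z) :
    ∀ᶠ w in 𝓝 z, DifferentiableAt ℝ u w :=
  (hu.eventually (by simp)).mono fun _ hw => hw.differentiableAt two_ne_zero

theorem ContDiffAt.differentiableAt_fderiv_apply (hu : ContDiffAt ℝ 2 u z) (v : E) :
    DifferentiableAt ℝ (fun w => fderiv ℝ u w v) z :=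
  ((hu.fderiv_right one_add_one_eq_two.le).differentiableAt one_ne_zero).clm_apply
    (differentiableAt_const v)

theorem fderiv_fun_sum_apply {ι : Type*} (s : Finset ι) {f : ι → E → ℝ}
    (hf : ∀ j ∈ s, DifferentiableAt ℝ (f j) z) (v : E) :
    fderiv ℝ (fun w => ∑ j ∈ s, f j w) z v = ∑ j ∈ s, fderiv ℝ (f j) z v := by
  simp [fderiv_fun_sum hf]

theorem secondDirDeriv_const_mul (c : ℝ) (u : E → ℝ) (v z : E) :
    secondDirDeriv (fun w => c * u w) v z = c * secondDirDeriv u v z := by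
  have hsmul : ∀ g : E → ℝ, (fun w => c * g w) = c • g := fun _ => rfl
  simp [secondDirDeriv, hsmul, fderiv_const_smul_field]

theorem secondDirDeriv_sum {ι : Type*} (s : Finset ι) {f : ι → E → ℝ}
    (hf : ∀ j ∈ s, ContDiffAt ℝ 2 (f j) z) (v : E) :
    secondDirDeriv (fun w => ∑ j ∈ s, f j w) v z = ∑ j ∈ s, secondDirDeriv (f j) v z := by
  have hfirst : (fun w => fderiv ℝ (fun y => ∑ j ∈ s, f j y) w v) =ᶠ[𝓝 z]
      fun w => ∑ j ∈ s, fderiv ℝ (f j) w v := by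
    filter_upwards [(eventually_all_finset s).2 fun j hj => (hf j hj).eventually_differentiableAt]
      with w hw
    exact fderiv_fun_sum_apply s hw v
  rw [secondDirDeriv, hfirst.fderiv_eq,
    fderiv_fun_sum_apply s fun j hj => (hf j hj).differentiableAt_fderiv_apply v]
  rfl

theorem secondDirDeriv_log (hu : ContDiffAt ℝ 2 u z) (hz : u z ≠ 0) (v : E) :
    secondDirDeriv (fun w => Real.log (u w)) v z
      = secondDirDeriv u v z / u z - fderiv ℝ u z v ^ 2 / u z ^ 2 := by
  have hfirst : (fun w => fderiv ℝ (fun y => Real.log (u y)) w v) =ᶠ[𝓝 z]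
      fun w => (u w)⁻¹ * fderiv ℝ u w v := by
    filter_upwards [hu.eventually_differentiableAt, hu.continuousAt.eventually_ne hz]
      with w hdiff hne
    simp [fderiv.log hdiff hne]
  have hinv : HasFDerivAt (fun w => (u w)⁻¹) ((-(u z ^ 2)⁻¹) • fderiv ℝ u z) z :=
    (hasDerivAt_inv hz).comp_hasFDerivAt z (hu.differentiableAt two_ne_zero).hasFDerivAt
  rw [secondDirDeriv, hfirst.fderiv_eq,
    (hinv.fun_mul (hu.differentiableAt_fderiv_apply v).hasFDerivAt).fderiv, secondDirDeriv]
  simp only [add_apply, smul_apply, smul_eq_mul]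
  field_simp
  ring

theorem sum_mul_secondDirDeriv_log_div_le {ι : Type*} (s : Finset ι) {c : ι → ℝ}
    {f : ι → E → ℝ} (hc : ∀ j ∈ s, 0 < c j) (hf : ∀ j ∈ s, ContDiffAt ℝ 2 (f j) z)
    (hpos : ∀ j ∈ s, 0 < f j z) (v : E) :
    (∑ j ∈ s, c j * f j z * secondDirDeriv (fun w => Real.log (f j w)) v z)
        / ∑ j ∈ s, c j * f j z
      ≤ secondDirDeriv (fun w => Real.log (∑ j ∈ s, c j * f j w)) v z := by
  rcases s.eq_empty_or_nonempty with rfl | hs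
  · simp [secondDirDeriv]
  have hS : 0 < ∑ j ∈ s, c j * f j z := sum_pos (fun j hj => mul_pos (hc j hj) (hpos j hj)) hs
  have hcf : ∀ j ∈ s, ContDiffAt ℝ 2 (fun w => c j * f j w) z :=
    fun j hj => contDiffAt_const.mul (hf j hj)
  have hfirst : ∀ j ∈ s, fderiv ℝ (fun w => c j * f j w) z v = c j * fderiv ℝ (f j) z v :=
    fun j hj => by simp [fderiv_const_mul ((hf j hj).differentiableAt two_ne_zero)]
  have hterm : ∀ j ∈ s, c j * f j z * secondDirDeriv (fun w => Real.log (f j w)) v z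
      = c j * secondDirDeriv (f j) v z - c j * fderiv ℝ (f j) z v ^ 2 / f j z := by
    intro j hj
    have := (hpos j hj).ne'
    rw [secondDirDeriv_log (hf j hj) this]
    field_simp
  rw [secondDirDeriv_log (ContDiffAt.sum hcf) hS.ne', secondDirDeriv_sum s hcf,
    fderiv_fun_sum_apply s (fun j hj => (hcf j hj).differentiableAt two_ne_zero),
    sum_congr rfl hfirst, sum_congr rfl hterm, sum_sub_distrib, sub_div]
  simp only [secondDirDeriv_const_mul]
  rw [pow_two (∑ j ∈ s, c j * f j z), ← div_div]
  gcongr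
  exact sq_sum_mul_div_sum_mul_le s hc hpos _

end SecondDirDeriv

theorem convex_sum_curvature_general (n : ℕ)
    (C : Set ℂ) (hC : IsOpen C)
    (G : ℕ → ℂ → ℝ) (α : ℕ → ℝ)
    (hα : ∀ j ∈ Finset.Icc 1 n, 0 < α j)
    (hG : ∀ j ∈ Finset.Icc 1 n, ContDiffOn ℝ 2 (G j) C)
    (hGpos : ∀ j ∈ Finset.Icc 1 n, ∀ z ∈ C, 0 < G j z) :
    ∀ z ∈ C,
      (∑ j ∈ Finset.Icc 1 n,
          (j : ℝ) * α j * G j z * lap (fun w => Real.log (G j w)) z)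
        / (∑ j ∈ Finset.Icc 1 n, (j : ℝ) * α j * G j z)
      ≤ lap (fun w => Real.log (∑ j ∈ Finset.Icc 1 n, (j : ℝ) * α j * G j w)) z := by
  intro z hz
  have hc : ∀ j ∈ Finset.Icc 1 n, 0 < (j : ℝ) * α j := fun j hj =>
    mul_pos (Nat.cast_pos.2 (mem_Icc.1 hj).1) (hα j hj)
  have hGz : ∀ j ∈ Finset.Icc 1 n, ContDiffAt ℝ 2 (G j) z := fun j hj =>
    (hG j hj).contDiffAt (hC.mem_nhds hz)
  have hGz_pos : ∀ j ∈ Finset.Icc 1 n, 0 < G j z := fun j hj => hGpos j hj z hz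
  simp only [lap_eq_secondDirDeriv_add, mul_add, sum_add_distrib, add_div]
  exact add_le_add (sum_mul_secondDirDeriv_log_div_le _ hc hGz hGz_pos 1)
    (sum_mul_secondDirDeriv_log_div_le _ hc hGz hGz_pos Complex.I)

/-- Convex-sum curvature inequality (Schumacher): for positive `C²` functions
`G j` on an open set `C ⊆ ℂ` and positive constants `α j`, pointwise,
`Δ log(Σ j α j G j) ≥ (Σ j α j G j · Δ log G j)/(Σ j α j G j)`. -/
theorem convex_sum_curvature (n : ℕ) (hn : 1 ≤ n)
    (C : Set ℂ) (hC : IsOpen C)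
    (G : ℕ → ℂ → ℝ) (α : ℕ → ℝ)
    (hα : ∀ j ∈ Finset.Icc 1 n, 0 < α j)
    (hG : ∀ j ∈ Finset.Icc 1 n, ContDiffOn ℝ 2 (G j) C)
    (hGpos : ∀ j ∈ Finset.Icc 1 n, ∀ z ∈ C, 0 < G j z) :
    ∀ z ∈ C,
      (∑ j ∈ Finset.Icc 1 n,
          (j : ℝ) * α j * G j z * lap (fun w => Real.log (G j w)) z)
        / (∑ j ∈ Finset.Icc 1 n, (j : ℝ) * α j * G j z)
      ≤ lap (fun w => Real.log (∑ j ∈ Finset.Icc 1 n, (j : ℝ) * α j * G j w)) z :=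
  convex_sum_curvature_general n C hC G α hα hG hGpos
end
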